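/- Let d ≥ 1, let V, G ∈ ℝ^{d×d} be invertible, let u ∈ ℝ^d with ‖u‖₂ = 1, let ε ∈ (0,1), and let c > 0. Define A := uuᵀ + ε(I_d − uuᵀ), M := V^{-1} A G, and W := VᵀV. Then M is invertible, the vector α := c G^{-1} u satisfies αᵀ(GᵀG)α = c², and for every β ∈ ℝ^d with βᵀ(GᵀG)β ≤ c² one has βᵀMᵀWMβ ≤ αᵀMᵀWMα, with equality if and only if β = α or β = −α. -/

import Mathlib

/-!
Everything is measured after the change of variables `y = G β`. Since `V M = A G`, the objective
`βᵀ MᵀWM β` is `‖A y‖²` and the constraint reads `‖y‖² ≤ c²`. The matrix `A` fixes `u` and scales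
`u⊥` by `ε`, so `‖A y‖² = (u ⬝ y)² + ε² (‖y‖² - (u ⬝ y)²)`. As `ε² < 1` and `(u ⬝ y)² ≤ ‖y‖²`
(Cauchy–Schwarz), this is at most `‖y‖² ≤ c²`, with equality exactly when `y` is parallel to `u`
and `‖y‖ = c`, i.e. `y = ± c u`, i.e. `β = ± α`.
-/

open Matrix

/-- The Euclidean (ℓ₂) norm of a vector in `ℝ^d`. -/
noncomputable def euclNorm {d : ℕ} (x : Fin d → ℝ) : ℝ := Real.sqrt (x ⬝ᵥ x)

namespace Matrix

variable {n : Type*} [Fintype n]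

theorem dotProduct_mulVec_transpose_mul_self (B : Matrix n n ℝ) (x : n → ℝ) :
    x ⬝ᵥ (Bᵀ * B) *ᵥ x = (B *ᵥ x) ⬝ᵥ (B *ᵥ x) := by
  rw [← mulVec_mulVec, dotProduct_transpose_mulVec, dotProduct_comm]

section UnitVector

variable {u : n → ℝ} (hu : u ⬝ᵥ u = 1)
include hu

theorem dotProduct_smul_self_of_unit (a b : ℝ) : (a • u) ⬝ᵥ (b • u) = a * b := by
  rw [smul_dotProduct, dotProduct_smul, hu, smul_eq_mul, smul_eq_mul, mul_one]

theorem dotProduct_self_sub_proj (y : n → ℝ) :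
    (y - (u ⬝ᵥ y) • u) ⬝ᵥ (y - (u ⬝ᵥ y) • u) = y ⬝ᵥ y - (u ⬝ᵥ y) ^ 2 := by
  simp only [sub_dotProduct, dotProduct_sub, smul_dotProduct, dotProduct_smul, smul_eq_mul, hu,
    dotProduct_comm y u]
  ring

theorem sq_dotProduct_le_of_unit (y : n → ℝ) : (u ⬝ᵥ y) ^ 2 ≤ y ⬝ᵥ y := by
  have hres : 0 ≤ (y - (u ⬝ᵥ y) • u) ⬝ᵥ (y - (u ⬝ᵥ y) • u) :=
    Fintype.sum_nonneg fun _ => mul_self_nonneg _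
  linarith [dotProduct_self_sub_proj hu y]

theorem eq_smul_of_sq_dotProduct_eq {y : n → ℝ} (h : (u ⬝ᵥ y) ^ 2 = y ⬝ᵥ y) :
    y = (u ⬝ᵥ y) • u := by
  refine sub_eq_zero.mp (dotProduct_self_eq_zero.mp ?_)
  rw [dotProduct_self_sub_proj hu y, h, sub_self]

end UnitVector

def scaleOrthogonal [DecidableEq n] (u : n → ℝ) (ε : ℝ) : Matrix n n ℝ :=
  vecMulVec u u + ε • (1 - vecMulVec u u)

variable [DecidableEq n] {u : n → ℝ} {ε : ℝ}

theorem scaleOrthogonal_mulVec (y : n → ℝ) :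
    scaleOrthogonal u ε *ᵥ y = (u ⬝ᵥ y) • u + ε • (y - (u ⬝ᵥ y) • u) := by
  simp [scaleOrthogonal, add_mulVec, sub_mulVec, smul_mulVec, vecMulVec_mulVec]

theorem dotProduct_self_scaleOrthogonal_mulVec (hu : u ⬝ᵥ u = 1) (y : n → ℝ) :
    (scaleOrthogonal u ε *ᵥ y) ⬝ᵥ (scaleOrthogonal u ε *ᵥ y) =
      (u ⬝ᵥ y) ^ 2 + ε ^ 2 * (y ⬝ᵥ y - (u ⬝ᵥ y) ^ 2) := by
  have hr : u ⬝ᵥ (y - (u ⬝ᵥ y) • u) = 0 := by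
    rw [dotProduct_sub, dotProduct_smul, hu, smul_eq_mul, mul_one, sub_self]
  rw [scaleOrthogonal_mulVec, ← dotProduct_self_sub_proj hu y]
  simp only [add_dotProduct, dotProduct_add, smul_dotProduct, dotProduct_smul, smul_eq_mul, hu,
    hr, dotProduct_comm _ u]
  ring

theorem isUnit_scaleOrthogonal (hu : u ⬝ᵥ u = 1) (hε : ε ≠ 0) :
    IsUnit (scaleOrthogonal u ε) := by
  rw [← mulVec_injective_iff_isUnit, ← coe_mulVecLin, injective_iff_map_eq_zero]
  intro y hy
  rw [coe_mulVecLin] at hy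
  have hnorm := dotProduct_self_scaleOrthogonal_mulVec (ε := ε) hu y
  rw [hy, dotProduct_zero] at hnorm
  have hs : (u ⬝ᵥ y) ^ 2 = 0 := by
    nlinarith [mul_nonneg (sq_nonneg ε) (sub_nonneg.mpr (sq_dotProduct_le_of_unit hu y)),
      sq_nonneg (u ⬝ᵥ y)]
  rw [hs, zero_add, sub_zero, eq_comm, mul_eq_zero] at hnorm
  exact dotProduct_self_eq_zero.mp (hnorm.resolve_left (pow_ne_zero 2 hε))

theorem dotProduct_self_scaleOrthogonal_mulVec_le (hu : u ⬝ᵥ u = 1) (hε : ε ^ 2 ≤ 1)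
    {c : ℝ} {y : n → ℝ} (hy : y ⬝ᵥ y ≤ c ^ 2) :
    (scaleOrthogonal u ε *ᵥ y) ⬝ᵥ (scaleOrthogonal u ε *ᵥ y) ≤ c ^ 2 := by
  rw [dotProduct_self_scaleOrthogonal_mulVec hu]
  nlinarith [sq_dotProduct_le_of_unit hu y]

theorem dotProduct_self_scaleOrthogonal_mulVec_eq_iff (hu : u ⬝ᵥ u = 1) (hε : ε ^ 2 < 1)
    {c : ℝ} {y : n → ℝ} (hy : y ⬝ᵥ y ≤ c ^ 2) :
    (scaleOrthogonal u ε *ᵥ y) ⬝ᵥ (scaleOrthogonal u ε *ᵥ y) = c ^ 2 ↔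
      y = c • u ∨ y = -(c • u) := by
  rw [dotProduct_self_scaleOrthogonal_mulVec hu]
  have hperp := sq_dotProduct_le_of_unit hu y
  constructor
  · intro h
    have hpar : (u ⬝ᵥ y) ^ 2 = y ⬝ᵥ y := by nlinarith
    have hsq : (u ⬝ᵥ y) ^ 2 = c ^ 2 := by nlinarith
    rw [eq_smul_of_sq_dotProduct_eq hu hpar]
    rcases sq_eq_sq_iff_eq_or_eq_neg.mp hsq with hs | hs
    · exact .inl (by rw [hs])
    · exact .inr (by rw [hs, neg_smul])
  · rintro (rfl | rfl) <;>
      simp only [dotProduct_neg, neg_dotProduct, dotProduct_smul, smul_dotProduct, smul_eq_mul, hu,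
        dotProduct_smul_self_of_unit hu] <;> ring

end Matrix

theorem knowledge_construction_general
    (d : ℕ)
    (V G : Matrix (Fin d) (Fin d) ℝ) (hV : IsUnit V) (hG : IsUnit G)
    (u : Fin d → ℝ) (hu : euclNorm u = 1)
    (ε : ℝ) (hε0 : 0 < ε) (hε1 : ε < 1)
    (c : ℝ)
    (A M W : Matrix (Fin d) (Fin d) ℝ)
    (hA : A = vecMulVec u u + ε • ((1 : Matrix (Fin d) (Fin d) ℝ) - vecMulVec u u))
    (hM : M = V⁻¹ * A * G)
    (hW : W = Vᵀ * V)
    (α : Fin d → ℝ) (hα : α = c • G⁻¹.mulVec u) :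
    IsUnit M ∧
    α ⬝ᵥ (Gᵀ * G).mulVec α = c ^ 2 ∧
    ∀ β : Fin d → ℝ, β ⬝ᵥ (Gᵀ * G).mulVec β ≤ c ^ 2 →
      β ⬝ᵥ (Mᵀ * W * M).mulVec β ≤ α ⬝ᵥ (Mᵀ * W * M).mulVec α ∧
      (β ⬝ᵥ (Mᵀ * W * M).mulVec β = α ⬝ᵥ (Mᵀ * W * M).mulVec α ↔ β = α ∨ β = -α) := by
  have hu1 : u ⬝ᵥ u = 1 := by
    rw [euclNorm, Real.sqrt_eq_one] at hu
    exact hu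
  have hA' : A = scaleOrthogonal u ε := hA
  have hε2 : ε ^ 2 < 1 := by nlinarith
  have hGα : G *ᵥ α = c • u := by
    rw [hα, mulVec_smul, mulVec_mulVec, mul_nonsing_inv G ((isUnit_iff_isUnit_det G).mp hG),
      one_mulVec]
  have hobj : ∀ β, β ⬝ᵥ (Mᵀ * W * M) *ᵥ β = (A *ᵥ (G *ᵥ β)) ⬝ᵥ (A *ᵥ (G *ᵥ β)) := by
    have hVM : V * M = A * G := by
      rw [hM, ← mul_assoc, ← mul_assoc, mul_nonsing_inv V ((isUnit_iff_isUnit_det V).mp hV),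
        one_mul]
    have hMWM : Mᵀ * W * M = (V * M)ᵀ * (V * M) := by
      simp only [hW, transpose_mul, mul_assoc]
    intro β
    rw [hMWM, dotProduct_mulVec_transpose_mul_self, hVM, mulVec_mulVec]
  have hcu : (c • u) ⬝ᵥ (c • u) = c ^ 2 := by rw [dotProduct_smul_self_of_unit hu1, sq]
  have hαobj : α ⬝ᵥ (Mᵀ * W * M) *ᵥ α = c ^ 2 := by
    rw [hobj, hGα, hA', dotProduct_self_scaleOrthogonal_mulVec_eq_iff hu1 hε2 hcu.le]
    exact .inl rfl
  have hAunit : IsUnit A := hA' ▸ isUnit_scaleOrthogonal hu1 hε0.ne'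
  refine ⟨hM ▸ ((isUnit_nonsing_inv_iff.mpr hV).mul hAunit).mul hG,
    by rw [dotProduct_mulVec_transpose_mul_self, hGα, hcu], fun β hβ => ?_⟩
  rw [dotProduct_mulVec_transpose_mul_self] at hβ
  rw [hαobj, hobj, hA', dotProduct_self_scaleOrthogonal_mulVec_eq_iff hu1 hε2 hβ, ← hGα,
    ← mulVec_neg, (mulVec_injective_iff_isUnit.mpr hG).eq_iff,
    (mulVec_injective_iff_isUnit.mpr hG).eq_iff]
  exact ⟨dotProduct_self_scaleOrthogonal_mulVec_le hu1 hε2.le hβ, Iff.rfl⟩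

/-- explicit knowledge construction used in the proof of Theorem 3.2, part 3.
With `V, G` invertible, `u` a unit vector, `ε ∈ (0,1)`, `c > 0`,
`A := uuᵀ + ε(I − uuᵀ)`, `M := V⁻¹ A G`, `W := VᵀV`: the matrix `M` is invertible,
`α := c G⁻¹ u` satisfies `αᵀ(GᵀG)α = c²`, and every `β` with `βᵀ(GᵀG)β ≤ c²`
satisfies `βᵀMᵀWMβ ≤ αᵀMᵀWMα`, with equality iff `β = α` or `β = −α`. -/
theorem knowledge_construction
    (d : ℕ) (hd : 1 ≤ d)
    (V G : Matrix (Fin d) (Fin d) ℝ) (hV : IsUnit V) (hG : IsUnit G)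
    (u : Fin d → ℝ) (hu : euclNorm u = 1)
    (ε : ℝ) (hε0 : 0 < ε) (hε1 : ε < 1)
    (c : ℝ) (hc : 0 < c)
    (A M W : Matrix (Fin d) (Fin d) ℝ)
    (hA : A = vecMulVec u u + ε • ((1 : Matrix (Fin d) (Fin d) ℝ) - vecMulVec u u))
    (hM : M = V⁻¹ * A * G)
    (hW : W = Vᵀ * V)
    (α : Fin d → ℝ) (hα : α = c • G⁻¹.mulVec u) :
    IsUnit M ∧
    α ⬝ᵥ (Gᵀ * G).mulVec α = c ^ 2 ∧
    ∀ β : Fin d → ℝ, β ⬝ᵥ (Gᵀ * G).mulVec β ≤ c ^ 2 →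
      β ⬝ᵥ (Mᵀ * W * M).mulVec β ≤ α ⬝ᵥ (Mᵀ * W * M).mulVec α ∧
      (β ⬝ᵥ (Mᵀ * W * M).mulVec β = α ⬝ᵥ (Mᵀ * W * M).mulVec α ↔ β = α ∨ β = -α) :=
  knowledge_construction_general d V G hV hG u hu ε hε0 hε1 c A M W hA hM hW α hα
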